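/- arXiv:1012.4827 — 3 statements merged into one kernel-verified Lean document; each statement's English description precedes it below -/
import Mathlib

section
/- Let g be a complex Lie algebra acting by derivations on a commutative Hopf algebra F over ℂ such that ε(X▷f)=0 for every X∈g and f∈F. Then the bracket [X⊗f, Y⊗g] := [X,Y]⊗fg + Y⊗ε(f)(X▷g) − X⊗ε(g)(Y▷f) endows the vector space g⊗F with a Lie algebra structure (it is antisymmetric and satisfies the Jacobi identity). -/
/-!
Both identities are multilinear, so it suffices to check them on pure tensors. There,
antisymmetry is the commutativity of `F` together with the skewness of the bracket of `g`.
For the Jacobi identity, expand the double brackets: since `ε` is multiplicative and kills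
`X ▷ k`, every term carrying `ε (X ▷ k)` vanishes; the terms with tensor factor `f * k * h`
add up to the Jacobi identity of `g`; and the remaining ones cancel in pairs because `▷` is a
Lie algebra action by derivations.
-/

open scoped TensorProduct
open TensorProduct

attribute [local instance 100] LieRing.ofAssociativeRing

noncomputable section

namespace LinearMap

variable {R M : Type*} [CommSemiring R] [AddCommMonoid M] [Module R M]

def jacobiator (B : M →ₗ[R] M →ₗ[R] M) : M →ₗ[R] M →ₗ[R] M →ₗ[R] M :=
  mk₂ R (fun a b ↦ B (B a b) + B.flip a ∘ₗ B b + B.flip b ∘ₗ B.flip a)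
    (fun a a' b ↦ by ext; simp only [map_add, add_apply, comp_apply, flip_apply]; abel)
    (fun r a b ↦ by
      ext; simp only [map_smul, add_apply, smul_apply, comp_apply, flip_apply, smul_add])
    (fun a b b' ↦ by ext; simp only [map_add, add_apply, comp_apply, flip_apply]; abel)
    (fun r a b ↦ by
      ext; simp only [map_smul, add_apply, smul_apply, comp_apply, flip_apply, smul_add])

theorem jacobiator_apply (B : M →ₗ[R] M →ₗ[R] M) (a b c : M) :
    B.jacobiator a b c = B (B a b) c + B (B b c) a + B (B c a) b :=
  rfl

end LinearMap

theorem lie_lie_add_lie_lie_add_lie_lie {L : Type*} [LieRing L] (X Y Z : L) :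
    ⁅⁅X, Y⁆, Z⁆ + ⁅⁅Y, Z⁆, X⁆ + ⁅⁅Z, X⁆, Y⁆ = 0 := by
  calc _ = -(⁅X, ⁅Y, Z⁆⁆ + ⁅Y, ⁅Z, X⁆⁆ + ⁅Z, ⁅X, Y⁆⁆) := by
        rw [← lie_skew ⁅X, Y⁆ Z, ← lie_skew ⁅Y, Z⁆ X, ← lie_skew ⁅Z, X⁆ Y]; abel
    _ = 0 := by rw [lie_jacobi, neg_zero]

section TensorBracket

variable {R L A : Type*} [CommRing R] [LieRing L] [LieAlgebra R L] [CommRing A] [Algebra R A]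

theorem flip_eq_neg_of_tmul (ε : A → R) (ρ : L → A → A)
    (B : L ⊗[R] A →ₗ[R] L ⊗[R] A →ₗ[R] L ⊗[R] A)
    (hB : ∀ (X Y : L) (f k : A),
      B (X ⊗ₜ f) (Y ⊗ₜ k) = ⁅X, Y⁆ ⊗ₜ (f * k) + Y ⊗ₜ (ε f • ρ X k) - X ⊗ₜ (ε k • ρ Y f)) :
    B.flip = -B :=
  TensorProduct.ext' fun Y k ↦ TensorProduct.ext' fun X f ↦ by
    rw [LinearMap.flip_apply, LinearMap.neg_apply, LinearMap.neg_apply, hB, hB, mul_comm,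
      ← lie_skew, neg_tmul]
    abel

variable (ε : A →ₐ[R] R) (act : L →ₗ⁅R⁆ Module.End R A)
  (B : L ⊗[R] A →ₗ[R] L ⊗[R] A →ₗ[R] L ⊗[R] A)

theorem bracket_bracket_tmul
    (hder : ∀ (X : L) (f k : A), act X (f * k) = act X f * k + f * act X k)
    (hε : ∀ (X : L) (f : A), ε (act X f) = 0)
    (hB : ∀ (X Y : L) (f k : A),
      B (X ⊗ₜ f) (Y ⊗ₜ k) = ⁅X, Y⁆ ⊗ₜ (f * k) + Y ⊗ₜ (ε f • act X k) - X ⊗ₜ (ε k • act Y f))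
    (X Y Z : L) (f k h : A) :
    B (B (X ⊗ₜ f) (Y ⊗ₜ k)) (Z ⊗ₜ h) =
      ⁅⁅X, Y⁆, Z⁆ ⊗ₜ (f * k * h)
      + (ε f * ε k) • (Z ⊗ₜ act X (act Y h) - Z ⊗ₜ act Y (act X h))
      - ε h • (⁅X, Y⁆ ⊗ₜ (act Z f * k) + ⁅X, Y⁆ ⊗ₜ (f * act Z k))
      + ε f • ⁅Y, Z⁆ ⊗ₜ (act X k * h) + ε k • ⁅Z, X⁆ ⊗ₜ (h * act Y f)
      - (ε f * ε h) • Y ⊗ₜ act Z (act X k) + (ε k * ε h) • X ⊗ₜ act Z (act Y f) := by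
  simp only [map_add, map_sub, LinearMap.add_apply, LinearMap.sub_apply, tmul_smul, map_smul,
    LinearMap.smul_apply, hB, map_mul, hε, hder, LieHom.map_lie, Ring.lie_def,
    Module.End.mul_apply, ← lie_skew Z X, mul_comm h]
  simp only [neg_tmul, tmul_sub, tmul_add, zero_smul]
  module

theorem jacobiator_eq_zero
    (hder : ∀ (X : L) (f k : A), act X (f * k) = act X f * k + f * act X k)
    (hε : ∀ (X : L) (f : A), ε (act X f) = 0)
    (hB : ∀ (X Y : L) (f k : A),
      B (X ⊗ₜ f) (Y ⊗ₜ k) = ⁅X, Y⁆ ⊗ₜ (f * k) + Y ⊗ₜ (ε f • act X k) - X ⊗ₜ (ε k • act Y f)) :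
    B.jacobiator = 0 :=
  TensorProduct.ext' fun X f ↦ TensorProduct.ext' fun Y k ↦ TensorProduct.ext' fun Z h ↦ by
    have hfkh : ⁅⁅X, Y⁆, Z⁆ ⊗ₜ[R] (f * k * h) + ⁅⁅Y, Z⁆, X⁆ ⊗ₜ (k * h * f)
        + ⁅⁅Z, X⁆, Y⁆ ⊗ₜ (h * f * k) = 0 := by
      rw [← mul_rotate k h f, ← mul_rotate f k h, ← add_tmul, ← add_tmul,
        lie_lie_add_lie_lie_add_lie_lie, zero_tmul]
    simp only [LinearMap.jacobiator_apply, bracket_bracket_tmul ε act B hder hε hB,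
      LinearMap.zero_apply]
    linear_combination (norm := module) hfkh

end TensorBracket

theorem bracket_on_tensor_is_lie_algebra
    {g : Type} [LieRing g] [LieAlgebra ℂ g]
    {F : Type} [CommRing F] [HopfAlgebra ℂ F]
    -- `g` acts on `F` (a Lie algebra map into endomorphisms of `F`) ...
    (act : g →ₗ⁅ℂ⁆ Module.End ℂ F)
    -- ... by derivations,
    (hder : ∀ (X : g) (f k : F), act X (f * k) = act X f * k + f * act X k)
    -- and `ε (X ▷ f) = 0` for all `X ∈ g`, `f ∈ F`.
    (hcounit : ∀ (X : g) (f : F), Coalgebra.counit (R := ℂ) (act X f) = 0)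
    -- The bracket of the statement, as a bilinear map on `g ⊗ F`:
    (B : g ⊗[ℂ] F →ₗ[ℂ] g ⊗[ℂ] F →ₗ[ℂ] g ⊗[ℂ] F)
    (hB : ∀ (X Y : g) (f k : F),
      B (X ⊗ₜ[ℂ] f) (Y ⊗ₜ[ℂ] k) =
        ⁅X, Y⁆ ⊗ₜ[ℂ] (f * k)
          + Y ⊗ₜ[ℂ] ((Coalgebra.counit (R := ℂ) f) • act X k)
          - X ⊗ₜ[ℂ] ((Coalgebra.counit (R := ℂ) k) • act Y f)) :
    -- Conclusion: the bracket is antisymmetric and satisfies the Jacobi identity,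
    -- i.e. it endows `g ⊗ F` with a Lie algebra structure.
    (∀ a b : g ⊗[ℂ] F, B a b = - B b a) ∧
    (∀ a b c : g ⊗[ℂ] F, B (B a b) c + B (B b c) a + B (B c a) b = 0) := by
  have hskew := flip_eq_neg_of_tmul _ _ B hB
  have hjac := jacobiator_eq_zero (Bialgebra.counitAlgHom ℂ F) act B hder hcounit hB
  exact ⟨fun a b ↦ LinearMap.congr_fun₂ hskew b a,
    fun a b c ↦ congr($hjac a b c)⟩
end
end

section
/- Let g be a finite-dimensional complex Lie algebra acting by derivations on a commutative Hopf algebra F with ε(X▷f)=0 for all X∈g, f∈F, and let ▽: g → g⊗F be a right F-coaction on g. Then ▽ satisfies the structure identity of g if and only if ▽ is a morphism of Lie algebras, where g⊗F carries the bracket [X⊗f, Y⊗g] = [X,Y]⊗fg + Y⊗ε(f)(X▷g) − X⊗ε(g)(Y▷f). -/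
/-!
Both `cov ⁅X, Y⁆` and `B (cov X) (cov Y)` are bilinear in `(X, Y)`, so `cov` is a Lie map as
soon as the two agree on pairs of basis vectors. Expanding both in the basis `b k ⊗ F` of
`g ⊗ F`, the coefficient of `b k` turns into the structure identity at `(i, j, k)`: the counit
axiom of the coaction gives `ε (f_i^j) = δ_ij`, which collapses the two derivation terms of the
bracket, and `C^k_{s,r} = -C^k_{r,s}` matches the quadratic terms.
-/

open scoped TensorProduct
open TensorProduct

attribute [local instance] LieRing.ofAssociativeRing

variable {R M N L ι : Type*} [CommRing R] [AddCommGroup M] [Module R M] [AddCommGroup N] [Module R N]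
  [LieRing L] [LieAlgebra R L]

theorem Module.Basis.forall_map_lie_iff (b : Basis ι R L)
    (f : L →ₗ[R] M) (B : M →ₗ[R] M →ₗ[R] M) :
    (∀ X Y, f ⁅X, Y⁆ = B (f X) (f Y)) ↔ ∀ i j, f ⁅b i, b j⁆ = B (f (b i)) (f (b j)) := by
  refine ⟨fun h i j => h _ _, fun h X Y => ?_⟩
  have hext : ((LieModule.toEnd R L L : L →ₗ[R] Module.End R L).compr₂ f) = (B ∘ₗ f).compl₂ f :=
    LinearMap.ext_basis b b fun i j => by simpa using h i j
  simpa using DFunLike.congr_fun (DFunLike.congr_fun hext X) Y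

variable [Fintype ι]

theorem TensorProduct.sum_tmul_basis_left_inj (b : Module.Basis ι R M) {u v : ι → N} :
    ∑ i, b i ⊗ₜ[R] u i = ∑ i, b i ⊗ₜ[R] v i ↔ u = v := by
  classical
  have coeff (w : ι → N) (k : ι) : equivFinsuppOfBasisLeft b (∑ i, b i ⊗ₜ[R] w i) k = w k := by
    simp [Finsupp.single_apply]
  refine ⟨fun h => funext fun k => ?_, fun h => h ▸ rfl⟩
  rw [← coeff u k, h, coeff]

theorem map_sum_smul_eq_sum_tmul (f : M →ₗ[R] M ⊗[R] N) (v : ι → M) (φ : ι → ι → N)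
    (hφ : ∀ i, f (v i) = ∑ j, v j ⊗ₜ[R] φ i j) (c : ι → R) :
    f (∑ l, c l • v l) = ∑ k, v k ⊗ₜ[R] ∑ l, c l • φ l k := by
  simp only [map_sum, map_smul, hφ, Finset.smul_sum, tmul_sum, tmul_smul]
  exact Finset.sum_comm

theorem counit_coeff_eq_ite [DecidableEq ι] (ε : N →ₗ[R] R) (f : M →ₗ[R] M ⊗[R] N)
    (hf : (TensorProduct.rid R M).toLinearMap ∘ₗ ε.lTensor M ∘ₗ f = LinearMap.id)
    (b : Module.Basis ι R M) (φ : ι → ι → N) (hφ : ∀ i, f (b i) = ∑ j, b j ⊗ₜ[R] φ i j)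
    (i j : ι) : ε (φ i j) = if i = j then 1 else 0 := by
  have h : ∑ j, ε (φ i j) • b j = b i := by
    simpa [hφ] using DFunLike.congr_fun hf (b i)
  simpa [b.repr_sum_self, Finsupp.single_apply] using congr_arg (fun x => b.repr x j) h

namespace Module.Basis

variable (b : Basis ι R L) {C : ι → ι → ι → R} (hC : ∀ i j, ⁅b i, b j⁆ = ∑ k, C i j k • b k)
include hC

theorem structureConstants_antisymm (i j k : ι) : C i j k = - C j i k := by
  have h : ∑ k, C i j k • b k = ∑ k, (-C j i k) • b k := by
    simp only [← hC, neg_smul, Finset.sum_neg_distrib, lie_skew]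
  simpa only [b.repr_sum_self] using congr_arg (fun x => b.repr x k) h

theorem sum_sum_structureConstants_smul_swap (k : ι) (x : ι → ι → N) :
    ∑ s, ∑ r, C s r k • x r s = -∑ r, ∑ s, C r s k • x r s := by
  rw [Finset.sum_comm]
  simp only [← Finset.sum_neg_distrib, ← neg_smul, ← b.structureConstants_antisymm hC]

end Module.Basis

variable {A : Type*} [Ring A] [Algebra R A]

theorem bracket_sum_tmul_sum_tmul (ε : A →ₗ[R] R) (act : L → Module.End R A)
    (B : L ⊗[R] A →ₗ[R] L ⊗[R] A →ₗ[R] L ⊗[R] A)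
    (hB : ∀ (X Y : L) (f k : A),
      B (X ⊗ₜ[R] f) (Y ⊗ₜ[R] k) = ⁅X, Y⁆ ⊗ₜ[R] (f * k) + Y ⊗ₜ[R] (ε f • act X k)
        - X ⊗ₜ[R] (ε k • act Y f))
    (b : ι → L) (C : ι → ι → ι → R) (hC : ∀ i j, ⁅b i, b j⁆ = ∑ k, C i j k • b k)
    (u v : ι → A) :
    B (∑ r, b r ⊗ₜ[R] u r) (∑ s, b s ⊗ₜ[R] v s) =
      ∑ k, b k ⊗ₜ[R] ((∑ r, ∑ s, C r s k • (u r * v s)) + ∑ r, ε (u r) • act (b r) (v k)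
        - ∑ s, ε (v s) • act (b s) (u k)) := by
  simp only [map_sum, LinearMap.sum_apply, hB, hC, sum_tmul, smul_tmul, Finset.sum_add_distrib,
    Finset.sum_sub_distrib, tmul_add, tmul_sub, tmul_sum]
  congr 1
  · rw [Finset.sum_comm, Finset.sum_comm_cycle]
  · exact Finset.sum_comm

theorem structure_identity_iff_lie_algebra_map_general
    {g : Type} [LieRing g] [LieAlgebra ℂ g]
    {F : Type} [CommRing F] [HopfAlgebra ℂ F]
    -- the action of `g` on `F` by derivations with `ε (X ▷ f) = 0`:
    (act : g →ₗ⁅ℂ⁆ Module.End ℂ F)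
    -- `▽ : g → g ⊗ F` is a right `F`-coaction:
    (cov : g →ₗ[ℂ] g ⊗[ℂ] F)
    (hcov_counit : (TensorProduct.rid ℂ g).toLinearMap ∘ₗ
        (LinearMap.lTensor g (Coalgebra.counit (R := ℂ) (A := F))) ∘ₗ cov = LinearMap.id)
    -- a basis of `g`, the first-order matrix coefficients `f_i^j` of `▽` and
    -- the structure constants `C^k_{i,j}` of `g`:
    {m : ℕ} (b : Module.Basis (Fin m) ℂ g)
    (φ : Fin m → Fin m → F)
    (hφ : ∀ i, cov (b i) = ∑ j, b j ⊗ₜ[ℂ] φ i j)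
    (C : Fin m → Fin m → Fin m → ℂ)
    (hC : ∀ i j, ⁅b i, b j⁆ = ∑ k, C i j k • b k)
    -- the bracket on `g ⊗ F`:
    (B : g ⊗[ℂ] F →ₗ[ℂ] g ⊗[ℂ] F →ₗ[ℂ] g ⊗[ℂ] F)
    (hB : ∀ (X Y : g) (f k : F),
      B (X ⊗ₜ[ℂ] f) (Y ⊗ₜ[ℂ] k) =
        ⁅X, Y⁆ ⊗ₜ[ℂ] (f * k)
          + Y ⊗ₜ[ℂ] ((Coalgebra.counit (R := ℂ) f) • act X k)
          - X ⊗ₜ[ℂ] ((Coalgebra.counit (R := ℂ) k) • act Y f)) :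
    -- Conclusion: the structure identity
    --   `f^k_{j,i} − f^k_{i,j} = Σ_{s,r} C^k_{s,r} f_i^r f_j^s + Σ_l C^l_{i,j} f_l^k`
    -- holds if and only if `▽` is a map of Lie algebras.
    (∀ i j k : Fin m,
        act (b i) (φ j k) - act (b j) (φ i k) =
          (∑ s, ∑ r, C s r k • (φ i r * φ j s)) + ∑ l, C i j l • φ l k) ↔
      (∀ X Y : g, cov ⁅X, Y⁆ = B (cov X) (cov Y)) := by
  classical
  have hε := counit_coeff_eq_ite Coalgebra.counit cov hcov_counit b φ hφ
  have on_basis (i j : Fin m) : cov ⁅b i, b j⁆ = B (cov (b i)) (cov (b j)) ↔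
      ∀ k, act (b i) (φ j k) - act (b j) (φ i k) =
        (∑ s, ∑ r, C s r k • (φ i r * φ j s)) + ∑ l, C i j l • φ l k := by
    rw [hC, map_sum_smul_eq_sum_tmul cov b φ hφ, hφ, hφ, bracket_sum_tmul_sum_tmul _ _ B hB b C hC,
      sum_tmul_basis_left_inj b, funext_iff]
    refine forall_congr' fun k => ?_
    simp only [hε, ite_smul, one_smul, zero_smul, Finset.sum_ite_eq, Finset.mem_univ, if_true]
    rw [b.sum_sum_structureConstants_smul_swap hC]
    constructor <;> intro h <;> linear_combination -h
  rw [b.forall_map_lie_iff]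
  exact forall₂_congr fun i j => (on_basis i j).symm

theorem structure_identity_iff_lie_algebra_map
    {g : Type} [LieRing g] [LieAlgebra ℂ g] [FiniteDimensional ℂ g]
    {F : Type} [CommRing F] [HopfAlgebra ℂ F]
    -- the action of `g` on `F` by derivations with `ε (X ▷ f) = 0`:
    (act : g →ₗ⁅ℂ⁆ Module.End ℂ F)
    (hder : ∀ (X : g) (f k : F), act X (f * k) = act X f * k + f * act X k)
    (hcounit : ∀ (X : g) (f : F), Coalgebra.counit (R := ℂ) (act X f) = 0)
    -- `▽ : g → g ⊗ F` is a right `F`-coaction: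
    (cov : g →ₗ[ℂ] g ⊗[ℂ] F)
    (hcov_counit : (TensorProduct.rid ℂ g).toLinearMap ∘ₗ
        (LinearMap.lTensor g (Coalgebra.counit (R := ℂ) (A := F))) ∘ₗ cov = LinearMap.id)
    (hcov_coassoc : (TensorProduct.assoc ℂ g F F).toLinearMap ∘ₗ
        (LinearMap.rTensor F cov) ∘ₗ cov =
      (LinearMap.lTensor g (Coalgebra.comul (R := ℂ) (A := F))) ∘ₗ cov)
    -- a basis of `g`, the first-order matrix coefficients `f_i^j` of `▽` and
    -- the structure constants `C^k_{i,j}` of `g`: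
    {m : ℕ} (b : Module.Basis (Fin m) ℂ g)
    (φ : Fin m → Fin m → F)
    (hφ : ∀ i, cov (b i) = ∑ j, b j ⊗ₜ[ℂ] φ i j)
    (C : Fin m → Fin m → Fin m → ℂ)
    (hC : ∀ i j, ⁅b i, b j⁆ = ∑ k, C i j k • b k)
    -- the bracket on `g ⊗ F`:
    (B : g ⊗[ℂ] F →ₗ[ℂ] g ⊗[ℂ] F →ₗ[ℂ] g ⊗[ℂ] F)
    (hB : ∀ (X Y : g) (f k : F),
      B (X ⊗ₜ[ℂ] f) (Y ⊗ₜ[ℂ] k) =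
        ⁅X, Y⁆ ⊗ₜ[ℂ] (f * k)
          + Y ⊗ₜ[ℂ] ((Coalgebra.counit (R := ℂ) f) • act X k)
          - X ⊗ₜ[ℂ] ((Coalgebra.counit (R := ℂ) k) • act Y f)) :
    -- Conclusion: the structure identity
    --   `f^k_{j,i} − f^k_{i,j} = Σ_{s,r} C^k_{s,r} f_i^r f_j^s + Σ_l C^l_{i,j} f_l^k`
    -- holds if and only if `▽` is a map of Lie algebras.
    (∀ i j k : Fin m,
        act (b i) (φ j k) - act (b j) (φ i k) =
          (∑ s, ∑ r, C s r k • (φ i r * φ j s)) + ∑ l, C i j l • φ l k) ↔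
      (∀ X Y : g, cov ⁅X, Y⁆ = B (cov X) (cov Y)) :=
  structure_identity_iff_lie_algebra_map_general act cov hcov_counit b φ hφ C hC B hB
end

section
/- Let (g₁,g₂) be a matched pair of finite-dimensional complex Lie algebras and let M be a left module over the double crossed sum Lie algebra g := g₁⋈g₂ whose restriction to g₂ is locally finite. Then, with the g₁-action obtained by restriction and the R(g₂)-coaction ▽_M: M → M⊗R(g₂) dual to the U(g₂)-action (▽_M(m)=m⁽⁰⁾⊗m⁽¹⁾ if and only if v·m = m⁽¹⁾(v)m⁽⁰⁾ for all v∈U(g₂)), M is an induced (g₁,R(g₂))-module. Conversely, every induced (g₁,R(g₂))-module arises in this way. -/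
/-!
Pairing with `U(g₂)` turns `R(g₂)`-coactions into `U(g₂)`-actions, `v · m = m⁽⁰⁾ ⟨m⁽¹⁾, v⟩`.
Since `R(g₂) → U(g₂)*` is injective, a tensor in `M ⊗ R(g₂)` or `M ⊗ R(g₂) ⊗ R(g₂)` is
determined by its contractions against `U(g₂)`, and contracting the counit and coassociativity
axioms gives exactly `1 · m = m` and `(vw) · m = v · (w · m)`. Likewise, contracting the
induced-module condition against `v` gives
`v · (X · m) = (v₍₁₎ ▷ X) · (v₍₂₎ · m) + (v ◁ X) · m`.
The `v` satisfying this identity form a subalgebra of `U(g₂)`, so it holds everywhere as soon as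
it holds on `g₂`, where it reads `[ζ, X] = ζ ▷ X + ζ ◁ X`: the bracket of `g₁ ⋈ g₂`. Local
finiteness comes for free, since `v · m` lies in the span of the left legs of `▽(m)`.
-/

open scoped TensorProduct
open TensorProduct

noncomputable section

attribute [local instance 100] LieRing.ofAssociativeRing

local notation "𝒰" g => UniversalEnvelopingAlgebra ℂ g

namespace InducedModule

section Contraction

variable {R : Type*} [CommRing R] {M F G : Type*} [AddCommGroup M] [Module R M]
  [AddCommGroup F] [Module R F] [AddCommGroup G] [Module R G]

variable (R M F) in
def contractRight : Module.Dual R F →ₗ[R] M ⊗[R] F →ₗ[R] M :=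
  (LinearMap.lTensorHom M).compr₂ (TensorProduct.rid R M).toLinearMap

lemma contractRight_apply (ψ : Module.Dual R F) (t : M ⊗[R] F) :
    contractRight R M F ψ t = TensorProduct.rid R M (LinearMap.lTensor M ψ t) := rfl

@[simp] lemma contractRight_tmul (ψ : Module.Dual R F) (m : M) (f : F) :
    contractRight R M F ψ (m ⊗ₜ f) = ψ f • m := by
  simp [contractRight_apply]

lemma contractRight_comp_lTensor (ψ : Module.Dual R G) (A : F →ₗ[R] G) :
    contractRight R M G ψ ∘ₗ LinearMap.lTensor M A = contractRight R M F (ψ ∘ₗ A) := by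
  ext m f; simp

lemma contractRight_dualDistrib_assoc (ψ χ : Module.Dual R F) (cov : M →ₗ[R] M ⊗[R] F) :
    contractRight R M (F ⊗[R] F) (dualDistrib R F F (ψ ⊗ₜ χ)) ∘ₗ
        (TensorProduct.assoc R M F F).toLinearMap ∘ₗ LinearMap.rTensor F cov =
      contractRight R M F ψ ∘ₗ cov ∘ₗ contractRight R M F χ := by
  ext m f
  simp only [TensorProduct.AlgebraTensorModule.curry_apply, TensorProduct.curry_apply,
    LinearMap.coe_restrictScalars, LinearMap.coe_comp, Function.comp_apply,
    LinearMap.rTensor_tmul, contractRight_tmul, map_smul]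
  induction cov m with
  | zero => simp
  | tmul m' f' => simp [dualDistrib_apply, mul_comm, smul_smul]
  | add x y hx hy => simp_all [TensorProduct.add_tmul]

end Contraction

section Separation

variable {k : Type*} [Field k] {M W : Type*} [AddCommGroup M] [Module k M]
  [AddCommGroup W] [Module k W]

lemma eq_of_forall_contractRight_eq {T : Set (Module.Dual k W)}
    (hT : ∀ w : W, (∀ ψ ∈ T, ψ w = 0) → w = 0) {t₁ t₂ : M ⊗[k] W}
    (h : ∀ ψ ∈ T, contractRight k M W ψ t₁ = contractRight k M W ψ t₂) : t₁ = t₂ := by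
  classical
  rw [← sub_eq_zero]
  set t := t₁ - t₂
  have ht : ∀ ψ ∈ T, contractRight k M W ψ t = 0 := fun ψ hψ => by simp [t, h ψ hψ]
  let c := Module.Basis.ofVectorSpace k M
  let e := (TensorProduct.congr c.repr (LinearEquiv.refl k W)).trans
    (TensorProduct.finsuppScalarLeft k W _)
  have he : ∀ (ψ : Module.Dual k W) (t : M ⊗[k] W) i,
      ψ (e t i) = c.repr (contractRight k M W ψ t) i := by
    intro ψ t i
    induction t with
    | zero => simp
    | tmul m w => simp [e, mul_comm]
    | add x y hx hy => simp only [map_add, Finsupp.add_apply, hx, hy]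
  refine e.map_eq_zero_iff.mp (Finsupp.ext fun i => hT _ fun ψ hψ => ?_)
  simp [he, ht ψ hψ]

end Separation

section DualAction

variable {R : Type*} [CommRing R] {U : Type*} [Ring U] [Algebra R U]
  {F M : Type*} [AddCommGroup F] [Module R F] [AddCommGroup M] [Module R M]

/-- The `U`-action `v • x = x⁽⁰⁾ ⟨x⁽¹⁾, v⟩` dual to a coaction `cov`, for a pairing `emb`. -/
def dualAction (emb : F →ₗ[R] Module.Dual R U) (cov : M →ₗ[R] M ⊗[R] F) :
    U →ₗ[R] Module.End R M :=
  (contractRight R M F).compl₂ cov ∘ₗ emb.flip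

lemma dualAction_apply (emb : F →ₗ[R] Module.Dual R U) (cov : M →ₗ[R] M ⊗[R] F) (v : U)
    (x : M) : dualAction emb cov v x = contractRight R M F (emb.flip v) (cov x) := rfl

lemma dualAction_eq_of_basis {ι : Type*} [Fintype ι] (b : Module.Basis ι R M)
    (emb : F →ₗ[R] Module.Dual R U) (cov : M →ₗ[R] M ⊗[R] F) (ρ : U →ₗ[R] Module.End R M)
    (φ : ι → ι → F) (hφ : ∀ i, cov (b i) = ∑ j, b j ⊗ₜ φ i j)
    (hφ_pair : ∀ i j v, emb (φ i j) v = b.coord j (ρ v (b i))) :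
    dualAction emb cov = ρ := by
  ext v : 1
  refine b.ext fun i => ?_
  conv_rhs => rw [← b.sum_repr (ρ v (b i))]
  simp [dualAction_apply, hφ, hφ_pair]

variable (emb : F →ₗ[R] Module.Dual R U) (cov : M →ₗ[R] M ⊗[R] F)

lemma rid_comp_lTensor_comp_eq_dualAction_one {ε : Module.Dual R F} (hε : ∀ f, ε f = emb f 1) :
    (TensorProduct.rid R M).toLinearMap ∘ₗ LinearMap.lTensor M ε ∘ₗ cov =
      dualAction emb cov 1 := by
  have : ε = emb.flip 1 := LinearMap.ext hε
  subst this; rfl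

lemma dualDistrib_apply_eq_contractRight (ψ χ : Module.Dual R F) (g : F ⊗[R] F) :
    dualDistrib R F F (ψ ⊗ₜ χ) g = ψ (contractRight R F F χ g) := by
  induction g with
  | zero => simp
  | tmul f h => simp [dualDistrib_apply, mul_comm]
  | add x y hx hy => simp [hx, hy]

lemma contractRight_comp_lTensor_comul {Δ : F →ₗ[R] F ⊗[R] F}
    (hΔ : ∀ f, dualDistrib R U U (TensorProduct.map emb emb (Δ f)) = emb f ∘ₗ LinearMap.mul' R U)
    (v w : U) :
    contractRight R M (F ⊗[R] F) (dualDistrib R F F (emb.flip v ⊗ₜ emb.flip w)) ∘ₗ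
        LinearMap.lTensor M Δ ∘ₗ cov =
      dualAction emb cov (v * w) := by
  have hpair : dualDistrib R F F (emb.flip v ⊗ₜ emb.flip w) ∘ₗ Δ = emb.flip (v * w) := by
    ext f
    have hswap : ∀ g : F ⊗[R] F, dualDistrib R F F (emb.flip v ⊗ₜ emb.flip w) g =
        dualDistrib R U U (TensorProduct.map emb emb g) (v ⊗ₜ w) := by
      intro g
      induction g with
      | zero => simp
      | tmul f h => simp [dualDistrib_apply]
      | add x y hx hy => simp [hx, hy]
    simp [hswap, hΔ]
  rw [← LinearMap.comp_assoc, contractRight_comp_lTensor, hpair]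
  rfl

end DualAction

section Coaction

variable {k : Type*} [Field k] {U : Type*} [Ring U] [Algebra k U]
  {F M : Type*} [AddCommGroup F] [Module k F] [AddCommGroup M] [Module k M]
  {emb : F →ₗ[k] Module.Dual k U}

lemma eq_of_forall_contractRight_flip_eq (hinj : Function.Injective emb) {t₁ t₂ : M ⊗[k] F}
    (h : ∀ v, contractRight k M F (emb.flip v) t₁ = contractRight k M F (emb.flip v) t₂) :
    t₁ = t₂ := by
  refine eq_of_forall_contractRight_eq (T := Set.range emb.flip) (fun f hf => ?_) ?_
  · exact hinj (LinearMap.ext fun v => by simpa using hf _ ⟨v, rfl⟩)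
  · rintro _ ⟨v, rfl⟩
    exact h v

lemma eq_of_forall_contractRight_dualDistrib_eq (hinj : Function.Injective emb)
    {t₁ t₂ : M ⊗[k] (F ⊗[k] F)}
    (h : ∀ v w, contractRight k M (F ⊗[k] F) (dualDistrib k F F (emb.flip v ⊗ₜ emb.flip w)) t₁ =
      contractRight k M (F ⊗[k] F) (dualDistrib k F F (emb.flip v ⊗ₜ emb.flip w)) t₂) :
    t₁ = t₂ := by
  refine eq_of_forall_contractRight_eq
    (T := Set.range fun p : U × U => dualDistrib k F F (emb.flip p.1 ⊗ₜ emb.flip p.2))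
    (fun g hg => ?_) ?_
  · refine eq_of_forall_contractRight_flip_eq hinj fun w => ?_
    refine hinj (LinearMap.ext fun v => ?_)
    have := hg _ ⟨(v, w), rfl⟩
    rw [dualDistrib_apply_eq_contractRight] at this
    simpa using this
  · rintro _ ⟨⟨v, w⟩, rfl⟩
    exact h v w

lemma coassoc_iff_dualAction_mul (hinj : Function.Injective emb) {Δ : F →ₗ[k] F ⊗[k] F}
    (hΔ : ∀ f, dualDistrib k U U (TensorProduct.map emb emb (Δ f)) = emb f ∘ₗ LinearMap.mul' k U)
    (cov : M →ₗ[k] M ⊗[k] F) :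
    (TensorProduct.assoc k M F F).toLinearMap ∘ₗ LinearMap.rTensor F cov ∘ₗ cov =
        LinearMap.lTensor M Δ ∘ₗ cov ↔
      ∀ v w, dualAction emb cov (v * w) = dualAction emb cov v * dualAction emb cov w := by
  have hassoc : ∀ v w x, contractRight k M (F ⊗[k] F)
      (dualDistrib k F F (emb.flip v ⊗ₜ emb.flip w))
        (TensorProduct.assoc k M F F (LinearMap.rTensor F cov (cov x))) =
      (dualAction emb cov v * dualAction emb cov w) x := fun v w x =>
    LinearMap.congr_fun (contractRight_dualDistrib_assoc _ _ cov) (cov x)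
  have hcomul : ∀ v w x, contractRight k M (F ⊗[k] F)
      (dualDistrib k F F (emb.flip v ⊗ₜ emb.flip w)) (LinearMap.lTensor M Δ (cov x)) =
      dualAction emb cov (v * w) x := fun v w x =>
    LinearMap.congr_fun (contractRight_comp_lTensor_comul emb cov hΔ v w) x
  constructor
  · intro h v w
    ext x
    rw [← hcomul, ← hassoc]
    exact congrArg _ (LinearMap.congr_fun h x).symm
  · intro h
    ext x
    refine eq_of_forall_contractRight_dualDistrib_eq hinj fun v w => ?_
    simp only [LinearMap.comp_apply, LinearEquiv.coe_coe]
    rw [hassoc, hcomul, h]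

end Coaction

section InducedTerm

variable {R : Type*} [CommRing R] {U : Type*} [Ring U] [Algebra R U]
  {F : Type*} [Ring F] [Algebra R F] {g M : Type*} [AddCommGroup g] [Module R g]
  [AddCommGroup M] [Module R M]

/-- `t = v₍₁₎ ⊗ v₍₂₎ ↦ (v₍₁₎ ▷ X) · v₍₂₎`; at `t = Δ v` this is the first term of the
induced-module identity `v · (X · m) = (v₍₁₎ ▷ X) · (v₍₂₎ · m) + (v ◁ X) · m`. -/
def crossAction (BL : g →ₗ[R] Module.End R M) (ρ : U →ₗ[R] Module.End R g)
    (ρM : U →ₗ[R] Module.End R M) (X : g) : U ⊗[R] U →ₗ[R] Module.End R M :=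
  LinearMap.mul' R (Module.End R M) ∘ₗ TensorProduct.map (BL ∘ₗ ρ.flip X) ρM

@[simp] lemma crossAction_tmul (BL : g →ₗ[R] Module.End R M) (ρ : U →ₗ[R] Module.End R g)
    (ρM : U →ₗ[R] Module.End R M) (X : g) (v w : U) :
    crossAction BL ρ ρM X (v ⊗ₜ w) = BL (ρ v X) * ρM w := rfl

lemma contractRight_dualDistrib_rTensor_lift {P N Q : Type*} [AddCommGroup P] [Module R P]
    [AddCommGroup N] [Module R N] [AddCommGroup Q] [Module R Q] (B : P →ₗ[R] N →ₗ[R] Q)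
    (ψ χ : Module.Dual R F) (p : P ⊗[R] F) (s : N ⊗[R] F) :
    contractRight R Q (F ⊗[R] F) (dualDistrib R F F (ψ ⊗ₜ χ))
        (LinearMap.rTensor (F ⊗[R] F) (TensorProduct.lift B)
          (TensorProduct.tensorTensorTensorComm R P F N F (p ⊗ₜ s))) =
      B (contractRight R P F ψ p) (contractRight R N F χ s) := by
  induction p with
  | zero => simp
  | add x y hx hy => simp [TensorProduct.add_tmul, hx, hy]
  | tmul y f =>
    induction s with
    | zero => simp
    | add x y hx hy => simp [TensorProduct.tmul_add, hx, hy]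
    | tmul n h => simp [dualDistrib_apply, smul_smul, mul_comm]

variable {emb : F →ₗ[R] Module.Dual R U} {Δ : U →ₗ[R] U ⊗[R] U}

lemma contractRight_map_lift_mul'
    (hemb_mul : ∀ f h : F, emb (f * h) =
      LinearMap.mul' R R ∘ₗ TensorProduct.map (emb f) (emb h) ∘ₗ Δ)
    (BL : g →ₗ[R] Module.End R M) (covg : g →ₗ[R] g ⊗[R] F) (cov : M →ₗ[R] M ⊗[R] F)
    (v : U) (X : g) (x : M) :
    contractRight R M F (emb.flip v)
        (TensorProduct.map (TensorProduct.lift BL) (LinearMap.mul' R F)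
          (TensorProduct.tensorTensorTensorComm R g F M F (covg X ⊗ₜ cov x))) =
      crossAction BL (dualAction emb covg) (dualAction emb cov) X (Δ v) x := by
  let pairing : U ⊗[R] U →ₗ[R] Module.Dual R (F ⊗[R] F) :=
    (dualDistrib R U U ∘ₗ TensorProduct.map emb emb).flip
  have hmul : emb.flip v ∘ₗ LinearMap.mul' R F = pairing (Δ v) := by
    ext f h
    have hdd : dualDistrib R U U (emb f ⊗ₜ emb h) =
        LinearMap.mul' R R ∘ₗ TensorProduct.map (emb f) (emb h) := by
      ext; simp [dualDistrib_apply]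
    simp [pairing, hemb_mul, hdd]
  have key : ∀ t, contractRight R M (F ⊗[R] F) (pairing t)
      (LinearMap.rTensor (F ⊗[R] F) (TensorProduct.lift BL)
        (TensorProduct.tensorTensorTensorComm R g F M F (covg X ⊗ₜ cov x))) =
      crossAction BL (dualAction emb covg) (dualAction emb cov) X t x := by
    intro t
    induction t with
    | zero => simp
    | add s t hs ht => simp [hs, ht]
    | tmul v₁ v₂ =>
      have : pairing (v₁ ⊗ₜ v₂) = dualDistrib R F F (emb.flip v₁ ⊗ₜ emb.flip v₂) := by
        ext f h; simp [pairing, dualDistrib_apply]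
      rw [this, contractRight_dualDistrib_rTensor_lift]
      rfl
  rw [← key, ← hmul, ← LinearMap.lTensor_comp_rTensor, LinearMap.comp_apply,
    ← LinearMap.comp_apply (contractRight R M F (emb.flip v)), contractRight_comp_lTensor]

lemma contractRight_lTensor_act {Dact : U →ₗ[R] g →ₗ[R] U} {act : g → Module.End R F}
    (hact : ∀ X f v, emb (act X f) v = emb f (Dact v X)) (v : U) (X : g) (t : M ⊗[R] F) :
    contractRight R M F (emb.flip v) (LinearMap.lTensor M (act X) t) =
      contractRight R M F (emb.flip (Dact v X)) t := by
  rw [← LinearMap.comp_apply (contractRight R M F (emb.flip v)), contractRight_comp_lTensor]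
  congr 2
  ext f
  exact hact X f v

end InducedTerm

section InducedIdentity

variable {R : Type*} [CommRing R] {U : Type*} [Ring U] [Algebra R U]
  {g M : Type*} [AddCommGroup g] [Module R g] [AddCommGroup M] [Module R M]

def InducedIdentityAt (BL : g →ₗ[R] Module.End R M) (ρ : U →ₗ[R] Module.End R g)
    (ρM : U →ₗ[R] Module.End R M) (Δ : U →ₗ[R] U ⊗[R] U) (Dact : U →ₗ[R] g →ₗ[R] U)
    (v : U) : Prop :=
  ∀ X, ρM v * BL X = crossAction BL ρ ρM X (Δ v) + ρM (Dact v X)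

variable (BL : g →ₗ[R] Module.End R M) (ρ : U →ₐ[R] Module.End R g)
  (ρM : U →ₐ[R] Module.End R M) (Δ : U →ₐ[R] U ⊗[R] U) {Dact : U →ₗ[R] g →ₗ[R] U}

lemma crossAction_mul_tmul (X : g) (w₁ w₂ : U) (s : U ⊗[R] U) :
    crossAction BL ρ.toLinearMap ρM.toLinearMap (ρ w₁ X) s * ρM w₂ =
      crossAction BL ρ.toLinearMap ρM.toLinearMap X (s * (w₁ ⊗ₜ w₂)) := by
  induction s with
  | zero => simp
  | add s t hs ht => simp [add_mul, hs, ht]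
  | tmul v₁ v₂ => simp [Module.End.mul_apply, mul_assoc]

lemma InducedIdentityAt.mul_crossAction {u : U}
    (hu : InducedIdentityAt BL ρ.toLinearMap ρM.toLinearMap Δ.toLinearMap Dact u)
    (X : g) (t : U ⊗[R] U) :
    ρM u * crossAction BL ρ.toLinearMap ρM.toLinearMap X t =
      crossAction BL ρ.toLinearMap ρM.toLinearMap X (Δ u * t) +
        ρM (LinearMap.mul' R U (LinearMap.rTensor U (Dact u ∘ₗ ρ.toLinearMap.flip X) t)) := by
  induction t with
  | zero => simp
  | add s t hs ht => simp only [mul_add, map_add, hs, ht]; abel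
  | tmul w₁ w₂ =>
    have hu' := hu (ρ w₁ X)
    simp only [AlgHom.toLinearMap_apply] at hu'
    rw [crossAction_tmul]
    simp only [AlgHom.toLinearMap_apply]
    rw [← mul_assoc, hu', add_mul, crossAction_mul_tmul]
    simp [map_mul]

/-- Multiplicativity `(uv) ◁ X = (u ◁ (v₍₁₎ ▷ X)) v₍₂₎ + u (v ◁ X)` of the right action is what
makes the induced-module identity closed under products. -/
lemma InducedIdentityAt.mul
    (hDact_mul : ∀ u v X, Dact (u * v) X =
      LinearMap.mul' R U (LinearMap.rTensor U (Dact u ∘ₗ ρ.toLinearMap.flip X) (Δ v)) +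
        u * Dact v X)
    {u v : U} (hu : InducedIdentityAt BL ρ.toLinearMap ρM.toLinearMap Δ.toLinearMap Dact u)
    (hv : InducedIdentityAt BL ρ.toLinearMap ρM.toLinearMap Δ.toLinearMap Dact v) :
    InducedIdentityAt BL ρ.toLinearMap ρM.toLinearMap Δ.toLinearMap Dact (u * v) := by
  intro X
  have hv' := hv X
  simp only [AlgHom.toLinearMap_apply] at hv' ⊢
  rw [map_mul, mul_assoc, hv', mul_add, hu.mul_crossAction, ← map_mul, ← map_mul, hDact_mul,
    map_add, add_assoc]

def inducedSubalgebra (hDact_one : ∀ X, Dact 1 X = 0)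
    (hDact_mul : ∀ u v X, Dact (u * v) X =
      LinearMap.mul' R U (LinearMap.rTensor U (Dact u ∘ₗ ρ.toLinearMap.flip X) (Δ v)) +
        u * Dact v X) :
    Subalgebra R U :=
  Submodule.toSubalgebra
    { carrier := {v | InducedIdentityAt BL ρ.toLinearMap ρM.toLinearMap Δ.toLinearMap Dact v}
      add_mem' := fun {u v} hu hv X => by
        simp only [InducedIdentityAt, AlgHom.toLinearMap_apply] at hu hv ⊢
        simp only [map_add, add_mul, LinearMap.add_apply, hu X, hv X]
        abel
      zero_mem' := fun X => by simp
      smul_mem' := fun r v hv X => by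
        simp only [InducedIdentityAt, AlgHom.toLinearMap_apply] at hv ⊢
        simp [hv X] }
    (fun X => by simp [Algebra.TensorProduct.one_def, hDact_one])
    (fun {_ _} hu hv => hu.mul BL ρ ρM Δ hDact_mul hv)

end InducedIdentity

section InducedCompat

variable {k : Type*} [Field k] {U : Type*} [Ring U] [Algebra k U]
  {F : Type*} [Ring F] [Algebra k F] {g M : Type*} [AddCommGroup g] [Module k g]
  [AddCommGroup M] [Module k M] {emb : F →ₗ[k] Module.Dual k U} {Δ : U →ₗ[k] U ⊗[k] U}
  {Dact : U →ₗ[k] g →ₗ[k] U} {act : g → Module.End k F}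

lemma coaction_compat_iff_inducedIdentityAt (hinj : Function.Injective emb)
    (hemb_mul : ∀ f h : F, emb (f * h) =
      LinearMap.mul' k k ∘ₗ TensorProduct.map (emb f) (emb h) ∘ₗ Δ)
    (hact : ∀ X f v, emb (act X f) v = emb f (Dact v X))
    (BL : g →ₗ[k] Module.End k M) (covg : g →ₗ[k] g ⊗[k] F) (cov : M →ₗ[k] M ⊗[k] F) :
    (∀ X x, cov (BL X x) =
        TensorProduct.map (TensorProduct.lift BL) (LinearMap.mul' k F)
          (TensorProduct.tensorTensorTensorComm k g F M F (covg X ⊗ₜ cov x)) +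
        LinearMap.lTensor M (act X) (cov x)) ↔
      ∀ v, InducedIdentityAt BL (dualAction emb covg) (dualAction emb cov) Δ Dact v := by
  have hcontract : ∀ v X x, contractRight k M F (emb.flip v)
      (TensorProduct.map (TensorProduct.lift BL) (LinearMap.mul' k F)
          (TensorProduct.tensorTensorTensorComm k g F M F (covg X ⊗ₜ cov x)) +
        LinearMap.lTensor M (act X) (cov x)) =
      (crossAction BL (dualAction emb covg) (dualAction emb cov) X (Δ v) +
        dualAction emb cov (Dact v X)) x := by
    intro v X x
    rw [map_add, contractRight_map_lift_mul' hemb_mul, contractRight_lTensor_act hact]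
    rfl
  constructor
  · intro h v X
    ext x
    rw [← hcontract, ← h]
    rfl
  · intro h X x
    refine eq_of_forall_contractRight_flip_eq hinj fun v => ?_
    rw [hcontract, ← h v X]
    rfl

end InducedCompat

lemma rightAction_mul_apply {R : Type*} [CommRing R] {U : Type*} [Ring U] [Algebra R U]
    {g : Type*} [AddCommGroup g] [Module R g] {ρ : U →ₗ[R] Module.End R g}
    {Δ : U →ₗ[R] U ⊗[R] U} {Dact : U →ₗ[R] g →ₗ[R] U}
    (hDact_mul : ∀ X : g,
      (Dact.flip X) ∘ₗ LinearMap.mul' R U =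
        LinearMap.mul' R U ∘ₗ
          (LinearMap.rTensor U (TensorProduct.lift Dact ∘ₗ LinearMap.lTensor U (ρ.flip X))) ∘ₗ
          (TensorProduct.assoc R U U U).symm.toLinearMap ∘ₗ LinearMap.lTensor U Δ
        + LinearMap.mul' R U ∘ₗ LinearMap.lTensor U (Dact.flip X))
    (u v : U) (X : g) :
    Dact (u * v) X =
      LinearMap.mul' R U (LinearMap.rTensor U (Dact u ∘ₗ ρ.flip X) (Δ v)) + u * Dact v X := by
  have h := LinearMap.congr_fun (hDact_mul X) (u ⊗ₜ v)
  have hassoc : ∀ t : U ⊗[R] U,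
      LinearMap.rTensor U (TensorProduct.lift Dact ∘ₗ LinearMap.lTensor U (ρ.flip X))
        ((TensorProduct.assoc R U U U).symm (u ⊗ₜ t)) =
      LinearMap.rTensor U (Dact u ∘ₗ ρ.flip X) t := by
    intro t
    induction t with
    | zero => simp
    | add s t hs ht => simp only [TensorProduct.tmul_add, map_add, hs, ht]
    | tmul w₁ w₂ => simp
  simpa [hassoc] using h

lemma adjoin_range_ι_eq_top (R L : Type*) [CommRing R] [LieRing L] [LieAlgebra R L] :
    Algebra.adjoin R (Set.range (UniversalEnvelopingAlgebra.ι R (L := L))) = ⊤ := by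
  have hsurj : Function.Surjective (UniversalEnvelopingAlgebra.mkAlgHom R L) :=
    Quot.mk_surjective
  have hrange : Set.range (UniversalEnvelopingAlgebra.ι R (L := L)) =
      UniversalEnvelopingAlgebra.mkAlgHom R L '' Set.range (TensorAlgebra.ι R (M := L)) := by
    rw [← Set.range_comp]
    rfl
  rw [hrange, Algebra.adjoin_image, TensorAlgebra.adjoin_range_ι, Algebra.map_top,
    AlgHom.range_eq_top]
  exact hsurj

section EnvelopingAlgebra

variable {R : Type*} [CommRing R] {L : Type*} [LieRing L] [LieAlgebra R L]
  {g M : Type*} [AddCommGroup g] [Module R g] [AddCommGroup M] [Module R M]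

local notation "U" => UniversalEnvelopingAlgebra R L

lemma inducedIdentityAt_ι_iff {Δ : U →ₗ[R] U ⊗[R] U}
    (hΔ : ∀ ζ, Δ (UniversalEnvelopingAlgebra.ι R ζ) =
      UniversalEnvelopingAlgebra.ι R ζ ⊗ₜ 1 + 1 ⊗ₜ UniversalEnvelopingAlgebra.ι R ζ)
    {ρ : U →ₐ[R] Module.End R g} {uact : L → g → g}
    (hρ : ∀ ζ X, ρ (UniversalEnvelopingAlgebra.ι R ζ) X = uact ζ X)
    {Dact : U →ₗ[R] g →ₗ[R] U} {dact : L → g → L}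
    (hDact : ∀ ζ X, Dact (UniversalEnvelopingAlgebra.ι R ζ) X =
      UniversalEnvelopingAlgebra.ι R (dact ζ X))
    (BL : g →ₗ[R] Module.End R M) (ρM : U →ₐ[R] Module.End R M) (ζ : L) :
    InducedIdentityAt BL ρ.toLinearMap ρM.toLinearMap Δ Dact (UniversalEnvelopingAlgebra.ι R ζ) ↔
      ∀ X, ⁅ρM (UniversalEnvelopingAlgebra.ι R ζ), BL X⁆ =
        BL (uact ζ X) + ρM (UniversalEnvelopingAlgebra.ι R (dact ζ X)) := by
  refine forall_congr' fun X => ?_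
  simp only [hΔ, map_add, crossAction_tmul, AlgHom.toLinearMap_apply, map_one, hρ, hDact,
    mul_one, Module.End.one_apply, Ring.lie_def, sub_eq_iff_eq_add]
  constructor <;> intro h <;> rw [h] <;> abel

lemma inducedIdentityAt_of_forall_ι (BL : g →ₗ[R] Module.End R M) (ρ : U →ₐ[R] Module.End R g)
    (ρM : U →ₐ[R] Module.End R M) (Δ : U →ₐ[R] U ⊗[R] U) {Dact : U →ₗ[R] g →ₗ[R] U}
    (hDact_one : ∀ X, Dact 1 X = 0)
    (hDact_mul : ∀ u v X, Dact (u * v) X =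
      LinearMap.mul' R U (LinearMap.rTensor U (Dact u ∘ₗ ρ.toLinearMap.flip X) (Δ v)) +
        u * Dact v X)
    (hι : ∀ ζ, InducedIdentityAt BL ρ.toLinearMap ρM.toLinearMap Δ.toLinearMap Dact
      (UniversalEnvelopingAlgebra.ι R ζ)) (v : U) :
    InducedIdentityAt BL ρ.toLinearMap ρM.toLinearMap Δ.toLinearMap Dact v := by
  have htop : inducedSubalgebra BL ρ ρM Δ hDact_one hDact_mul = ⊤ := by
    rw [eq_top_iff, ← adjoin_range_ι_eq_top, Algebra.adjoin_le_iff]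
    rintro _ ⟨ζ, rfl⟩
    exact hι ζ
  have hv : v ∈ inducedSubalgebra BL ρ ρM Δ hDact_one hDact_mul := htop ▸ Algebra.mem_top
  exact hv

end EnvelopingAlgebra

section DoubleCrossedSum

variable {R : Type*} [CommRing R] {g₁ g₂ a L : Type*} [LieRing g₁] [LieAlgebra R g₁]
  [LieRing g₂] [LieAlgebra R g₂] [LieRing a] [LieAlgebra R a] [LieRing L] [LieAlgebra R L]
  {uact : g₂ →ₗ[R] g₁ →ₗ[R] g₁} {dact : g₂ →ₗ[R] g₁ →ₗ[R] g₂} {ea : a ≃ₗ[R] g₁ × g₂}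

variable (uact dact ea) in
/-- `ea` identifies `a` with `g₁ ⋈ g₂`, the matched pair acting by `ζ ▷ X = uact ζ X` and
`ζ ◁ X = dact ζ X`. -/
def IsDoubleCrossedSum : Prop :=
  ∀ x y : a, ea ⁅x, y⁆ =
    (⁅(ea x).1, (ea y).1⁆ + uact (ea x).2 (ea y).1 - uact (ea y).2 (ea x).1,
     ⁅(ea x).2, (ea y).2⁆ + dact (ea x).2 (ea y).1 - dact (ea y).2 (ea x).1)

lemma lie_map_symm_inr_map_symm_inl
    (hbracket : IsDoubleCrossedSum uact dact ea)
    (ρa : a →ₗ⁅R⁆ L) (ζ : g₂) (X : g₁) :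
    ⁅ρa (ea.symm (0, ζ)), ρa (ea.symm (X, 0))⁆ =
      ρa (ea.symm (uact ζ X, 0)) + ρa (ea.symm (0, dact ζ X)) := by
  rw [← LieHom.map_lie, ← map_add, ← map_add]
  congr 1
  apply ea.injective
  rw [hbracket]
  simp

def doubleCrossedSumLift
    (hbracket : IsDoubleCrossedSum uact dact ea)
    (ρ₁ : g₁ →ₗ⁅R⁆ L) (ρ₂ : g₂ →ₗ⁅R⁆ L)
    (hmixed : ∀ ζ X, ⁅ρ₂ ζ, ρ₁ X⁆ = ρ₁ (uact ζ X) + ρ₂ (dact ζ X)) : a →ₗ⁅R⁆ L where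
  toLinearMap := (ρ₁.toLinearMap ∘ₗ LinearMap.fst R g₁ g₂ +
    ρ₂.toLinearMap ∘ₗ LinearMap.snd R g₁ g₂) ∘ₗ ea.toLinearMap
  map_lie' {x y} := by
    have hmixed' : ∀ X ζ, ⁅ρ₁ X, ρ₂ ζ⁆ = -(ρ₁ (uact ζ X) + ρ₂ (dact ζ X)) := fun X ζ => by
      rw [← lie_skew, hmixed]
    change ρ₁ (ea ⁅x, y⁆).1 + ρ₂ (ea ⁅x, y⁆).2 =
      ⁅ρ₁ (ea x).1 + ρ₂ (ea x).2, ρ₁ (ea y).1 + ρ₂ (ea y).2⁆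
    simp only [hbracket x y, map_add, map_sub, LieHom.map_lie, add_lie, lie_add, hmixed, hmixed']
    abel

variable (hbracket : IsDoubleCrossedSum uact dact ea)
    (ρ₁ : g₁ →ₗ⁅R⁆ L) (ρ₂ : g₂ →ₗ⁅R⁆ L)
    (hmixed : ∀ ζ X, ⁅ρ₂ ζ, ρ₁ X⁆ = ρ₁ (uact ζ X) + ρ₂ (dact ζ X))

lemma doubleCrossedSumLift_symm_inl (X : g₁) :
    doubleCrossedSumLift hbracket ρ₁ ρ₂ hmixed (ea.symm (X, 0)) = ρ₁ X := by
  change ρ₁ (ea (ea.symm (X, 0))).1 + ρ₂ (ea (ea.symm (X, 0))).2 = ρ₁ X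
  simp

lemma doubleCrossedSumLift_symm_inr (ζ : g₂) :
    doubleCrossedSumLift hbracket ρ₁ ρ₂ hmixed (ea.symm (0, ζ)) = ρ₂ ζ := by
  change ρ₁ (ea (ea.symm (0, ζ))).1 + ρ₂ (ea (ea.symm (0, ζ))).2 = ρ₂ ζ
  simp

end DoubleCrossedSum

lemma exists_finiteDimensional_dualAction_invariant {k : Type*} [Field k] {U : Type*} [Ring U]
    [Algebra k U] {F M : Type*} [AddCommGroup F] [Module k F] [AddCommGroup M] [Module k M]
    (emb : F →ₗ[k] Module.Dual k U) (cov : M →ₗ[k] M ⊗[k] F) (hone : dualAction emb cov 1 = 1)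
    (hmul : ∀ u v, dualAction emb cov (u * v) = dualAction emb cov u * dualAction emb cov v)
    (x : M) :
    ∃ W : Submodule k M, x ∈ W ∧ FiniteDimensional k W ∧
      ∀ u, ∀ w ∈ W, dualAction emb cov u w ∈ W := by
  classical
  refine ⟨LinearMap.range ((dualAction emb cov).flip x), ⟨1, by simp [hone]⟩, ?_, ?_⟩
  · obtain ⟨S, hS⟩ := TensorProduct.exists_finset (cov x)
    have := FiniteDimensional.span_of_finite k ((S : Set (M × F)).toFinite.image Prod.fst)
    refine Submodule.finiteDimensional_of_le
      (S₂ := Submodule.span k (Prod.fst '' (S : Set (M × F)))) ?_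
    rintro _ ⟨v, rfl⟩
    rw [LinearMap.flip_apply, dualAction_apply, hS, map_sum]
    refine Submodule.sum_mem _ fun p hp => ?_
    rw [contractRight_tmul]
    exact Submodule.smul_mem _ _ (Submodule.subset_span ⟨p, hp, rfl⟩)
  · rintro u _ ⟨v, rfl⟩
    exact ⟨u * v, by simp [hmul]⟩

end InducedModule

open InducedModule

theorem induced_modules_from_doubleCrossedSum_modules_general
    {g₁ : Type} [LieRing g₁] [LieAlgebra ℂ g₁]
    {g₂ : Type} [LieRing g₂] [LieAlgebra ℂ g₂]
    -- the mutual actions of the matched pair `(g₁, g₂)`: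
    (uact : g₂ →ₗ[ℂ] g₁ →ₗ[ℂ] g₁) (dact : g₂ →ₗ[ℂ] g₁ →ₗ[ℂ] g₂)
    -- the double crossed sum Lie algebra `a = g₁ ⋈ g₂`:
    {a : Type} [LieRing a] [LieAlgebra ℂ a]
    (ea : a ≃ₗ[ℂ] g₁ × g₂)
    (hbracket : ∀ x y : a,
      ea ⁅x, y⁆ =
        (⁅(ea x).1, (ea y).1⁆ + uact (ea x).2 (ea y).1 - uact (ea y).2 (ea x).1,
         ⁅(ea x).2, (ea y).2⁆ + dact (ea x).2 (ea y).1 - dact (ea y).2 (ea x).1))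
    -- the coalgebra structure of `U(g₂)` (generators primitive):
    (comul₂ : (𝒰 g₂) →ₐ[ℂ] (𝒰 g₂) ⊗[ℂ] (𝒰 g₂))
    (hcomul₂ : ∀ ζ : g₂, comul₂ (UniversalEnvelopingAlgebra.ι ℂ ζ) =
      UniversalEnvelopingAlgebra.ι ℂ ζ ⊗ₜ[ℂ] 1 + 1 ⊗ₜ[ℂ] UniversalEnvelopingAlgebra.ι ℂ ζ)
    -- the induced left action of `U(g₂)` on `g₁` and right action of `g₁` on `U(g₂)`:
    (ρ : (𝒰 g₂) →ₐ[ℂ] Module.End ℂ g₁)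
    (hρ : ∀ (ζ : g₂) (X : g₁), ρ (UniversalEnvelopingAlgebra.ι ℂ ζ) X = uact ζ X)
    (Dact : (𝒰 g₂) →ₗ[ℂ] g₁ →ₗ[ℂ] (𝒰 g₂))
    (hDact_gen : ∀ (ζ : g₂) (X : g₁),
      Dact (UniversalEnvelopingAlgebra.ι ℂ ζ) X =
        UniversalEnvelopingAlgebra.ι ℂ (dact ζ X))
    (hDact_one : ∀ X : g₁, Dact 1 X = 0)
    (hDact_mul : ∀ X : g₁,
      (Dact.flip X) ∘ₗ LinearMap.mul' ℂ (𝒰 g₂) =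
        LinearMap.mul' ℂ (𝒰 g₂) ∘ₗ
          (LinearMap.rTensor (𝒰 g₂)
            (TensorProduct.lift Dact ∘ₗ
              LinearMap.lTensor (𝒰 g₂) (ρ.toLinearMap.flip X))) ∘ₗ
          (TensorProduct.assoc ℂ (𝒰 g₂) (𝒰 g₂) (𝒰 g₂)).symm.toLinearMap ∘ₗ
          LinearMap.lTensor (𝒰 g₂) comul₂.toLinearMap
        + LinearMap.mul' ℂ (𝒰 g₂) ∘ₗ LinearMap.lTensor (𝒰 g₂) (Dact.flip X))
    -- `F` is the Hopf algebra `R(g₂)` of representative functions on `U(g₂)`: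
    {F : Type} [CommRing F] [HopfAlgebra ℂ F]
    (emb : F →ₗ[ℂ] Module.Dual ℂ (𝒰 g₂))
    (hemb_inj : Function.Injective emb)
    (hemb_mul : ∀ f h : F, emb (f * h) =
      LinearMap.mul' ℂ ℂ ∘ₗ (TensorProduct.map (emb f) (emb h)) ∘ₗ comul₂.toLinearMap)
    (hemb_comul : ∀ f : F,
      (TensorProduct.dualDistrib ℂ (𝒰 g₂) (𝒰 g₂))
          ((TensorProduct.map emb emb) (Coalgebra.comul (R := ℂ) (A := F) f)) =
        (emb f) ∘ₗ LinearMap.mul' ℂ (𝒰 g₂))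
    (hemb_counit : ∀ f : F, Coalgebra.counit (R := ℂ) (A := F) f = emb f 1)
    -- the `g₁`-Hopf algebra structure of `R(g₂)`: the action `⟨X ▷ f, v⟩ = ⟨f, v ◁ X⟩`
    -- and the coaction `▽_Alg` with coefficients `f_i^j (v) = ⟨v ▷ X_i, θ^j⟩`:
    (actF : g₁ →ₗ⁅ℂ⁆ Module.End ℂ F)
    (hactF : ∀ (X : g₁) (f : F) (v : 𝒰 g₂), emb (actF X f) v = emb f (Dact v X))
    (covF : g₁ →ₗ[ℂ] g₁ ⊗[ℂ] F)
    {n : ℕ} (b : Module.Basis (Fin n) ℂ g₁)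
    (φF : Fin n → Fin n → F)
    (hφF : ∀ i, covF (b i) = ∑ j, b j ⊗ₜ[ℂ] φF i j)
    (hφF_pair : ∀ i j v, emb (φF i j) v = b.coord j (ρ v (b i))) :
    -- Conclusion (forward direction): for every left `a = g₁ ⋈ g₂`-module `M` whose
    -- restriction to `g₂` is locally finite, the restricted `g₁`-action together with
    -- the coaction dual to the `U(g₂)`-action makes `M` an induced `(g₁,R(g₂))`-module:
    (∀ (M : Type) (_ : AddCommGroup M) (_ : Module ℂ M)
      (ρa : a →ₗ⁅ℂ⁆ Module.End ℂ M)
      -- local finiteness of the `g₂`-action: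
      (_ : ∀ x : M, ∃ W : Submodule ℂ M, x ∈ W ∧ FiniteDimensional ℂ W ∧
        ∀ ζ : g₂, ∀ w ∈ W, ρa (ea.symm (0, ζ)) w ∈ W)
      -- the extension of the `g₂`-action to `U(g₂)`:
      (ρU : (𝒰 g₂) →ₐ[ℂ] Module.End ℂ M)
      (_ : ∀ ζ : g₂, ρU (UniversalEnvelopingAlgebra.ι ℂ ζ) = ρa (ea.symm (0, ζ)))
      -- the dual coaction `▽_M` (`v · m = m⁽¹⁾(v) m⁽⁰⁾`):
      (covM : M →ₗ[ℂ] M ⊗[ℂ] F)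
      (_ : ∀ (v : 𝒰 g₂) (x : M),
        ρU v x = (TensorProduct.rid ℂ M) ((LinearMap.lTensor M (emb.flip v)) (covM x))),
      -- `▽_M` is a coaction and `M` is an induced `(g₁, R(g₂))`-module:
      ((TensorProduct.rid ℂ M).toLinearMap ∘ₗ
          (LinearMap.lTensor M (Coalgebra.counit (R := ℂ) (A := F))) ∘ₗ covM =
        LinearMap.id) ∧
      ((TensorProduct.assoc ℂ M F F).toLinearMap ∘ₗ
          (LinearMap.rTensor F covM) ∘ₗ covM =
        (LinearMap.lTensor M (Coalgebra.comul (R := ℂ) (A := F))) ∘ₗ covM) ∧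
      (∀ (X : g₁) (x : M),
        covM (ρa (ea.symm (X, 0)) x) =
          (TensorProduct.map
              (TensorProduct.lift
                (ρa.toLinearMap ∘ₗ ea.symm.toLinearMap ∘ₗ LinearMap.inl ℂ g₁ g₂))
              (LinearMap.mul' ℂ F))
            ((TensorProduct.tensorTensorTensorComm ℂ g₁ F M F)
              ((covF X) ⊗ₜ[ℂ] (covM x)))
          + (LinearMap.lTensor M (actF X)) (covM x)))
    ∧
    -- Conclusion (converse direction): every induced `(g₁, R(g₂))`-module comes this
    -- way:
    (∀ (N : Type) (_ : AddCommGroup N) (_ : Module ℂ N)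
      (ρN : g₁ →ₗ⁅ℂ⁆ Module.End ℂ N)
      (covN : N →ₗ[ℂ] N ⊗[ℂ] F)
      (_ : (TensorProduct.rid ℂ N).toLinearMap ∘ₗ
          (LinearMap.lTensor N (Coalgebra.counit (R := ℂ) (A := F))) ∘ₗ covN =
        LinearMap.id)
      (_ : (TensorProduct.assoc ℂ N F F).toLinearMap ∘ₗ
          (LinearMap.rTensor F covN) ∘ₗ covN =
        (LinearMap.lTensor N (Coalgebra.comul (R := ℂ) (A := F))) ∘ₗ covN)
      (_ : ∀ (X : g₁) (x : N),
        covN (ρN X x) =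
          (TensorProduct.map (TensorProduct.lift ρN.toLinearMap) (LinearMap.mul' ℂ F))
            ((TensorProduct.tensorTensorTensorComm ℂ g₁ F N F)
              ((covF X) ⊗ₜ[ℂ] (covN x)))
          + (LinearMap.lTensor N (actF X)) (covN x)),
      ∃ (ρa : a →ₗ⁅ℂ⁆ Module.End ℂ N) (ρU : (𝒰 g₂) →ₐ[ℂ] Module.End ℂ N),
        (∀ (X : g₁) (x : N), ρa (ea.symm (X, 0)) x = ρN X x) ∧
        (∀ ζ : g₂, ρU (UniversalEnvelopingAlgebra.ι ℂ ζ) = ρa (ea.symm (0, ζ))) ∧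
        (∀ x : N, ∃ W : Submodule ℂ N, x ∈ W ∧ FiniteDimensional ℂ W ∧
          ∀ ζ : g₂, ∀ w ∈ W, ρa (ea.symm (0, ζ)) w ∈ W) ∧
        (∀ (v : 𝒰 g₂) (x : N),
          ρU v x = (TensorProduct.rid ℂ N) ((LinearMap.lTensor N (emb.flip v)) (covN x)))) := by
  have hDact_mul' := rightAction_mul_apply hDact_mul
  have hρ₁ : dualAction emb covF = ρ.toLinearMap :=
    dualAction_eq_of_basis b emb covF ρ.toLinearMap φF hφF hφF_pair
  refine ⟨fun M _ _ ρa _ ρU hρU covM hcov => ?_,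
    fun N _ _ ρN covN hcounit hcoassoc hcompat => ?_⟩
  · have hρM : dualAction emb covM = ρU.toLinearMap :=
      LinearMap.ext fun v => LinearMap.ext fun x => (hcov v x).symm
    refine ⟨?_, (coassoc_iff_dualAction_mul hemb_inj hemb_comul covM).mpr ?_,
      (coaction_compat_iff_inducedIdentityAt hemb_inj hemb_mul hactF
        (ρa.toLinearMap ∘ₗ ea.symm.toLinearMap ∘ₗ LinearMap.inl ℂ g₁ g₂) covF covM).mpr ?_⟩
    · rw [rid_comp_lTensor_comp_eq_dualAction_one emb covM hemb_counit, hρM]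
      exact map_one ρU
    · rw [hρM]
      exact map_mul ρU
    · rw [hρ₁, hρM]
      refine inducedIdentityAt_of_forall_ι _ ρ ρU comul₂ hDact_one hDact_mul' fun ζ => ?_
      refine (inducedIdentityAt_ι_iff hcomul₂ hρ hDact_gen _ ρU ζ).mpr fun X => ?_
      rw [hρU, hρU]
      exact lie_map_symm_inr_map_symm_inl hbracket ρa ζ X
  · have hone : dualAction emb covN 1 = 1 :=
      (rid_comp_lTensor_comp_eq_dualAction_one emb covN hemb_counit).symm.trans hcounit
    have hmul := (coassoc_iff_dualAction_mul hemb_inj hemb_comul covN).mp hcoassoc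
    let ρU := AlgHom.ofLinearMap (dualAction emb covN) hone hmul
    have hid := (coaction_compat_iff_inducedIdentityAt hemb_inj hemb_mul hactF
      ρN.toLinearMap covF covN).mp hcompat
    rw [hρ₁] at hid
    let ρa : a →ₗ⁅ℂ⁆ Module.End ℂ N :=
      doubleCrossedSumLift hbracket ρN (ρU.toLieHom.comp (UniversalEnvelopingAlgebra.ι ℂ))
        fun ζ => (inducedIdentityAt_ι_iff hcomul₂ hρ hDact_gen ρN.toLinearMap ρU ζ).mp (hid _)
    have hρa₂ : ∀ ζ, ρa (ea.symm (0, ζ)) = ρU (UniversalEnvelopingAlgebra.ι ℂ ζ) :=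
      doubleCrossedSumLift_symm_inr hbracket _ _ _
    refine ⟨ρa, ρU, fun X => LinearMap.congr_fun (doubleCrossedSumLift_symm_inl hbracket _ _ _ X),
      fun ζ => (hρa₂ ζ).symm, fun x => ?_, fun v x => rfl⟩
    obtain ⟨W, hxW, hW, hinv⟩ := exists_finiteDimensional_dualAction_invariant emb covN hone hmul x
    exact ⟨W, hxW, hW, fun ζ w hw => hρa₂ ζ ▸ hinv _ w hw⟩

theorem induced_modules_from_doubleCrossedSum_modules
    {g₁ : Type} [LieRing g₁] [LieAlgebra ℂ g₁] [FiniteDimensional ℂ g₁]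
    {g₂ : Type} [LieRing g₂] [LieAlgebra ℂ g₂] [FiniteDimensional ℂ g₂]
    -- the mutual actions of the matched pair `(g₁, g₂)`:
    (uact : g₂ →ₗ[ℂ] g₁ →ₗ[ℂ] g₁) (dact : g₂ →ₗ[ℂ] g₁ →ₗ[ℂ] g₂)
    (hmp1 : ∀ (ζ ξ : g₂) (X : g₁),
      uact ⁅ζ, ξ⁆ X = uact ζ (uact ξ X) - uact ξ (uact ζ X))
    (hmp2 : ∀ (ζ : g₂) (X Y : g₁),
      dact ζ ⁅X, Y⁆ = dact (dact ζ X) Y - dact (dact ζ Y) X)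
    (hmp3 : ∀ (ζ : g₂) (X Y : g₁),
      uact ζ ⁅X, Y⁆ =
        ⁅uact ζ X, Y⁆ + ⁅X, uact ζ Y⁆ + uact (dact ζ X) Y - uact (dact ζ Y) X)
    (hmp4 : ∀ (ζ ξ : g₂) (X : g₁),
      dact ⁅ζ, ξ⁆ X =
        ⁅dact ζ X, ξ⁆ + ⁅ζ, dact ξ X⁆ + dact ζ (uact ξ X) - dact ξ (uact ζ X))
    -- the double crossed sum Lie algebra `a = g₁ ⋈ g₂`:
    {a : Type} [LieRing a] [LieAlgebra ℂ a]
    (ea : a ≃ₗ[ℂ] g₁ × g₂)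
    (hbracket : ∀ x y : a,
      ea ⁅x, y⁆ =
        (⁅(ea x).1, (ea y).1⁆ + uact (ea x).2 (ea y).1 - uact (ea y).2 (ea x).1,
         ⁅(ea x).2, (ea y).2⁆ + dact (ea x).2 (ea y).1 - dact (ea y).2 (ea x).1))
    -- the coalgebra structure of `U(g₂)` (generators primitive):
    (comul₂ : (𝒰 g₂) →ₐ[ℂ] (𝒰 g₂) ⊗[ℂ] (𝒰 g₂)) (counit₂ : (𝒰 g₂) →ₐ[ℂ] ℂ)
    (hcomul₂ : ∀ ζ : g₂, comul₂ (UniversalEnvelopingAlgebra.ι ℂ ζ) =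
      UniversalEnvelopingAlgebra.ι ℂ ζ ⊗ₜ[ℂ] 1 + 1 ⊗ₜ[ℂ] UniversalEnvelopingAlgebra.ι ℂ ζ)
    (hcounit₂ : ∀ ζ : g₂, counit₂ (UniversalEnvelopingAlgebra.ι ℂ ζ) = 0)
    -- the induced left action of `U(g₂)` on `g₁` and right action of `g₁` on `U(g₂)`:
    (ρ : (𝒰 g₂) →ₐ[ℂ] Module.End ℂ g₁)
    (hρ : ∀ (ζ : g₂) (X : g₁), ρ (UniversalEnvelopingAlgebra.ι ℂ ζ) X = uact ζ X)
    (Dact : (𝒰 g₂) →ₗ[ℂ] g₁ →ₗ[ℂ] (𝒰 g₂))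
    (hDact_gen : ∀ (ζ : g₂) (X : g₁),
      Dact (UniversalEnvelopingAlgebra.ι ℂ ζ) X =
        UniversalEnvelopingAlgebra.ι ℂ (dact ζ X))
    (hDact_one : ∀ X : g₁, Dact 1 X = 0)
    (hDact_mul : ∀ X : g₁,
      (Dact.flip X) ∘ₗ LinearMap.mul' ℂ (𝒰 g₂) =
        LinearMap.mul' ℂ (𝒰 g₂) ∘ₗ
          (LinearMap.rTensor (𝒰 g₂)
            (TensorProduct.lift Dact ∘ₗ
              LinearMap.lTensor (𝒰 g₂) (ρ.toLinearMap.flip X))) ∘ₗ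
          (TensorProduct.assoc ℂ (𝒰 g₂) (𝒰 g₂) (𝒰 g₂)).symm.toLinearMap ∘ₗ
          LinearMap.lTensor (𝒰 g₂) comul₂.toLinearMap
        + LinearMap.mul' ℂ (𝒰 g₂) ∘ₗ LinearMap.lTensor (𝒰 g₂) (Dact.flip X))
    -- `F` is the Hopf algebra `R(g₂)` of representative functions on `U(g₂)`:
    {F : Type} [CommRing F] [HopfAlgebra ℂ F]
    (emb : F →ₗ[ℂ] Module.Dual ℂ (𝒰 g₂))
    (hemb_inj : Function.Injective emb)
    (hrange : ∀ φ : Module.Dual ℂ (𝒰 g₂), (∃ f : F, emb f = φ) ↔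
      ∃ I : TwoSidedIdeal (𝒰 g₂),
        FiniteDimensional ℂ ((𝒰 g₂) ⧸ (Submodule.restrictScalars ℂ I.asIdeal)) ∧
        ∀ v ∈ I, φ v = 0)
    (hemb_mul : ∀ f h : F, emb (f * h) =
      LinearMap.mul' ℂ ℂ ∘ₗ (TensorProduct.map (emb f) (emb h)) ∘ₗ comul₂.toLinearMap)
    (hemb_one : emb 1 = counit₂.toLinearMap)
    (hemb_comul : ∀ f : F,
      (TensorProduct.dualDistrib ℂ (𝒰 g₂) (𝒰 g₂))
          ((TensorProduct.map emb emb) (Coalgebra.comul (R := ℂ) (A := F) f)) =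
        (emb f) ∘ₗ LinearMap.mul' ℂ (𝒰 g₂))
    (hemb_counit : ∀ f : F, Coalgebra.counit (R := ℂ) (A := F) f = emb f 1)
    -- the `g₁`-Hopf algebra structure of `R(g₂)`: the action `⟨X ▷ f, v⟩ = ⟨f, v ◁ X⟩`
    -- and the coaction `▽_Alg` with coefficients `f_i^j (v) = ⟨v ▷ X_i, θ^j⟩`:
    (actF : g₁ →ₗ⁅ℂ⁆ Module.End ℂ F)
    (hactF : ∀ (X : g₁) (f : F) (v : 𝒰 g₂), emb (actF X f) v = emb f (Dact v X))
    (covF : g₁ →ₗ[ℂ] g₁ ⊗[ℂ] F)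
    {n : ℕ} (b : Module.Basis (Fin n) ℂ g₁)
    (φF : Fin n → Fin n → F)
    (hφF : ∀ i, covF (b i) = ∑ j, b j ⊗ₜ[ℂ] φF i j)
    (hφF_pair : ∀ i j v, emb (φF i j) v = b.coord j (ρ v (b i))) :
    -- Conclusion (forward direction): for every left `a = g₁ ⋈ g₂`-module `M` whose
    -- restriction to `g₂` is locally finite, the restricted `g₁`-action together with
    -- the coaction dual to the `U(g₂)`-action makes `M` an induced `(g₁,R(g₂))`-module:
    (∀ (M : Type) (_ : AddCommGroup M) (_ : Module ℂ M)
      (ρa : a →ₗ⁅ℂ⁆ Module.End ℂ M)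
      -- local finiteness of the `g₂`-action:
      (_ : ∀ x : M, ∃ W : Submodule ℂ M, x ∈ W ∧ FiniteDimensional ℂ W ∧
        ∀ ζ : g₂, ∀ w ∈ W, ρa (ea.symm (0, ζ)) w ∈ W)
      -- the extension of the `g₂`-action to `U(g₂)`:
      (ρU : (𝒰 g₂) →ₐ[ℂ] Module.End ℂ M)
      (_ : ∀ ζ : g₂, ρU (UniversalEnvelopingAlgebra.ι ℂ ζ) = ρa (ea.symm (0, ζ)))
      -- the dual coaction `▽_M` (`v · m = m⁽¹⁾(v) m⁽⁰⁾`):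
      (covM : M →ₗ[ℂ] M ⊗[ℂ] F)
      (_ : ∀ (v : 𝒰 g₂) (x : M),
        ρU v x = (TensorProduct.rid ℂ M) ((LinearMap.lTensor M (emb.flip v)) (covM x))),
      -- `▽_M` is a coaction and `M` is an induced `(g₁, R(g₂))`-module:
      ((TensorProduct.rid ℂ M).toLinearMap ∘ₗ
          (LinearMap.lTensor M (Coalgebra.counit (R := ℂ) (A := F))) ∘ₗ covM =
        LinearMap.id) ∧
      ((TensorProduct.assoc ℂ M F F).toLinearMap ∘ₗ
          (LinearMap.rTensor F covM) ∘ₗ covM =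
        (LinearMap.lTensor M (Coalgebra.comul (R := ℂ) (A := F))) ∘ₗ covM) ∧
      (∀ (X : g₁) (x : M),
        covM (ρa (ea.symm (X, 0)) x) =
          (TensorProduct.map
              (TensorProduct.lift
                (ρa.toLinearMap ∘ₗ ea.symm.toLinearMap ∘ₗ LinearMap.inl ℂ g₁ g₂))
              (LinearMap.mul' ℂ F))
            ((TensorProduct.tensorTensorTensorComm ℂ g₁ F M F)
              ((covF X) ⊗ₜ[ℂ] (covM x)))
          + (LinearMap.lTensor M (actF X)) (covM x)))
    ∧
    -- Conclusion (converse direction): every induced `(g₁, R(g₂))`-module comes this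
    -- way:
    (∀ (N : Type) (_ : AddCommGroup N) (_ : Module ℂ N)
      (ρN : g₁ →ₗ⁅ℂ⁆ Module.End ℂ N)
      (covN : N →ₗ[ℂ] N ⊗[ℂ] F)
      (_ : (TensorProduct.rid ℂ N).toLinearMap ∘ₗ
          (LinearMap.lTensor N (Coalgebra.counit (R := ℂ) (A := F))) ∘ₗ covN =
        LinearMap.id)
      (_ : (TensorProduct.assoc ℂ N F F).toLinearMap ∘ₗ
          (LinearMap.rTensor F covN) ∘ₗ covN =
        (LinearMap.lTensor N (Coalgebra.comul (R := ℂ) (A := F))) ∘ₗ covN)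
      (_ : ∀ (X : g₁) (x : N),
        covN (ρN X x) =
          (TensorProduct.map (TensorProduct.lift ρN.toLinearMap) (LinearMap.mul' ℂ F))
            ((TensorProduct.tensorTensorTensorComm ℂ g₁ F N F)
              ((covF X) ⊗ₜ[ℂ] (covN x)))
          + (LinearMap.lTensor N (actF X)) (covN x)),
      ∃ (ρa : a →ₗ⁅ℂ⁆ Module.End ℂ N) (ρU : (𝒰 g₂) →ₐ[ℂ] Module.End ℂ N),
        (∀ (X : g₁) (x : N), ρa (ea.symm (X, 0)) x = ρN X x) ∧
        (∀ ζ : g₂, ρU (UniversalEnvelopingAlgebra.ι ℂ ζ) = ρa (ea.symm (0, ζ))) ∧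
        (∀ x : N, ∃ W : Submodule ℂ N, x ∈ W ∧ FiniteDimensional ℂ W ∧
          ∀ ζ : g₂, ∀ w ∈ W, ρa (ea.symm (0, ζ)) w ∈ W) ∧
        (∀ (v : 𝒰 g₂) (x : N),
          ρU v x = (TensorProduct.rid ℂ N) ((LinearMap.lTensor N (emb.flip v)) (covN x)))) :=
  induced_modules_from_doubleCrossedSum_modules_general uact dact ea hbracket comul₂ hcomul₂ ρ hρ
    Dact hDact_gen hDact_one hDact_mul emb hemb_inj hemb_mul hemb_comul hemb_counit actF hactF covF
    b φF hφF hφF_pair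
end
end
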